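/- Let F : ℝ → Mₙ(ℝ) and m : ℝ → ℝⁿ be continuous, let n̄ : ℝ → ℝⁿ be differentiable with n̄'(t) = F(t) n̄(t) + m(t), and let Σ : ℝ → Mₙ(ℝ) be differentiable with Σ(t) symmetric positive definite for every t and Σ'(t) = F(t)Σ(t) + Σ(t)F(t)ᵀ. Define the Gaussian density ρ(x,t) := (2π)^{−n/2} (det Σ(t))^{−1/2} exp(−(1/2)(x − n̄(t))ᵀ Σ(t)⁻¹ (x − n̄(t))). Then ρ satisfies the continuity equation ∂ρ/∂t + ∇·((F(t)x + m(t)) ρ) = 0 for all x ∈ ℝⁿ and all t, where ∇· denotes the divergence in x. -/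

import Mathlib

open Set Matrix
open scoped RealInnerProductSpace

/-- The divergence in `x` of a vector field `w : ℝⁿ → ℝⁿ`: `∑ i, ∂wᵢ/∂xᵢ`. -/
noncomputable def diver {n : ℕ} (w : EuclideanSpace ℝ (Fin n) → EuclideanSpace ℝ (Fin n))
    (x : EuclideanSpace ℝ (Fin n)) : ℝ :=
  ∑ i : Fin n, fderiv ℝ (fun y => w y i) x (EuclideanSpace.single i 1)

/-- The Gaussian density with mean `nb` and covariance matrix `S` on `ℝⁿ`:
`(2π)^{−n/2} (det S)^{−1/2} exp(−(1/2)(x − nb)ᵀ S⁻¹ (x − nb))`. -/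
noncomputable def gaussDensity {n : ℕ} (S : Matrix (Fin n) (Fin n) ℝ)
    (nb x : EuclideanSpace ℝ (Fin n)) : ℝ :=
  (2 * Real.pi) ^ (-(n : ℝ) / 2) * S.det ^ (-(1 : ℝ) / 2) *
    Real.exp (-(1 / 2) * ⟪x - nb, Matrix.toEuclideanLin S⁻¹ (x - nb)⟫)

/-!
Write `ρ = c(t) exp(-q/2)` with `q = (x - n̄)ᵀ Σ⁻¹ (x - n̄)` and put `w = Σ⁻¹ (x - n̄)`.
By Jacobi's formula and `Σ' = FΣ + ΣFᵀ`, `(det Σ)' / det Σ = tr (Σ⁻¹ Σ') = 2 tr F`; since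
`(Σ⁻¹)' = -Σ⁻¹ Σ' Σ⁻¹`, `q' = -2 wᵀ n̄' - wᵀ Σ' w = -2 wᵀ (F n̄ + m) - 2 wᵀ F (x - n̄)`.
Hence `∂ρ/∂t = ρ (-tr F + wᵀ (F x + m))`. On the other hand `∇ρ = -ρ w`, so
`∇·((F x + m) ρ) = ρ tr F - ρ wᵀ (F x + m)`, and the two cancel.
-/

open WithLp (ofLp)

namespace Matrix

section Calculus

variable {𝕜 ι : Type*} [NontriviallyNormedField 𝕜] [Fintype ι] {t : 𝕜}

theorem _root_.HasDerivAt.dotProduct {u v : 𝕜 → ι → 𝕜} {u' v' : ι → 𝕜}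
    (hu : HasDerivAt u u' t) (hv : HasDerivAt v v' t) :
    HasDerivAt (fun s => u s ⬝ᵥ v s) (u' ⬝ᵥ v t + u t ⬝ᵥ v') t := by
  refine (HasDerivAt.fun_sum (u := Finset.univ) fun i _ =>
    (hasDerivAt_pi.1 hu i).fun_mul (hasDerivAt_pi.1 hv i)).congr_deriv ?_
  rw [Finset.sum_add_distrib]
  rfl

theorem _root_.HasDerivAt.mulVec {A : 𝕜 → Matrix ι ι 𝕜} {A' : Matrix ι ι 𝕜} {v : 𝕜 → ι → 𝕜}
    {v' : ι → 𝕜} (hA : HasDerivAt A A' t) (hv : HasDerivAt v v' t) :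
    HasDerivAt (fun s => A s *ᵥ v s) (A' *ᵥ v t + A t *ᵥ v') t :=
  hasDerivAt_pi.2 fun i => (hasDerivAt_pi.1 hA i).dotProduct hv

variable [DecidableEq ι]

theorem hasDerivAt_det_sum_updateCol {M : 𝕜 → Matrix ι ι 𝕜} {M' : Matrix ι ι 𝕜}
    (h : HasDerivAt M M' t) :
    HasDerivAt (fun s => (M s).det) (∑ c, ((M t).updateCol c fun k => M' k c).det) t := by
  have hM : ∀ i j, HasDerivAt (fun s => M s i j) (M' i j) t := fun i j =>
    hasDerivAt_pi.1 (hasDerivAt_pi.1 h i) j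
  have hsum := HasDerivAt.fun_sum fun σ (_ : σ ∈ Finset.univ) =>
    (HasDerivAt.fun_finsetProd fun c (_ : c ∈ Finset.univ) => hM (σ c) c).const_mul
      (Equiv.Perm.sign σ : 𝕜)
  simp only [det_apply']
  refine hsum.congr_deriv ?_
  simp only [Finset.mul_sum, smul_eq_mul]
  rw [Finset.sum_comm]
  refine Finset.sum_congr rfl fun c _ => Finset.sum_congr rfl fun σ _ => ?_
  rw [← Finset.mul_prod_erase Finset.univ _ (Finset.mem_univ c)]
  congr 1
  rw [mul_comm]
  congr 1
  · simp
  · exact Finset.prod_congr rfl fun j hj => by simp [(Finset.mem_erase.mp hj).1]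

theorem sum_det_updateCol_eq_trace_adjugate_mul {R : Type*} [CommRing R] (A B : Matrix ι ι R) :
    ∑ c, (A.updateCol c fun k => B k c).det = (A.adjugate * B).trace := by
  refine Finset.sum_congr rfl fun c _ => ?_
  rw [← cramer_apply, cramer_eq_adjugate_mulVec]
  rfl

theorem hasDerivAt_det {M : 𝕜 → Matrix ι ι 𝕜} {M' : Matrix ι ι 𝕜} (h : HasDerivAt M M' t) :
    HasDerivAt (fun s => (M s).det) ((M t).adjugate * M').trace t :=
  sum_det_updateCol_eq_trace_adjugate_mul (M t) M' ▸ hasDerivAt_det_sum_updateCol h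

end Calculus

variable {ι : Type*} [Fintype ι]

theorem dotProduct_mul_add_mul_transpose_mulVec {S : Matrix ι ι ℝ} (hS : S.IsSymm)
    (F : Matrix ι ι ℝ) (w : ι → ℝ) :
    w ⬝ᵥ (F * S + S * Fᵀ) *ᵥ w = 2 * (w ⬝ᵥ F *ᵥ S *ᵥ w) := by
  rw [add_mulVec, ← mulVec_mulVec, ← mulVec_mulVec, dotProduct_add, dotProduct_mulVec w S,
    ← mulVec_transpose, hS.eq, dotProduct_comm, dotProduct_mulVec, vecMul_transpose, two_mul]

variable [DecidableEq ι] {t : ℝ}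

theorem hasDerivAt_inv {M : ℝ → Matrix ι ι ℝ} {M' : Matrix ι ι ℝ}
    (h : HasDerivAt M M' t) (ht : IsUnit (M t).det) :
    HasDerivAt (fun s => (M s)⁻¹) (-((M t)⁻¹ * M' * (M t)⁻¹)) t := by
  -- The `L∞`-operator norm makes the matrices a complete normed algebra whose topology is,
  -- definitionally, the entrywise one used in the statement.
  let := Matrix.linftyOpNormedRing (n := ι) (α := ℝ)
  let := Matrix.linftyOpNormedAlgebra (n := ι) (R := ℝ) (α := ℝ)
  obtain ⟨u, hu⟩ := (M t).isUnit_iff_isUnit_det.2 ht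
  have hinv : HasFDerivAt Ring.inverse
      (-ContinuousLinearMap.mulLeftRight ℝ _ (M t)⁻¹ (M t)⁻¹) (M t) := by
    rw [← hu, nonsing_inv_eq_ringInverse, Ring.inverse_unit]
    exact hasFDerivAt_ringInverse u
  simp only [nonsing_inv_eq_ringInverse] at hinv ⊢
  exact hinv.comp_hasDerivAt t h

theorem hasDerivAt_det_rpow {M : ℝ → Matrix ι ι ℝ} {M' : Matrix ι ι ℝ} (h : HasDerivAt M M' t)
    (hpos : 0 < (M t).det) (p : ℝ) :
    HasDerivAt (fun s => (M s).det ^ p) (p * (M t).det ^ p * ((M t)⁻¹ * M').trace) t := by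
  have hadj : (M t).adjugate = (M t).det • (M t)⁻¹ := by
    rw [inv_def, Ring.inverse_eq_inv, smul_smul, mul_inv_cancel₀ hpos.ne', one_smul]
  refine ((hasDerivAt_det h).rpow_const (Or.inl hpos.ne')).congr_deriv ?_
  rw [hadj, smul_mul, trace_smul, smul_eq_mul, Real.rpow_sub_one hpos.ne']
  field_simp

theorem hasDerivAt_dotProduct_inv_mulVec {S : ℝ → Matrix ι ι ℝ} {S' : Matrix ι ι ℝ}
    {v : ℝ → ι → ℝ} {v' : ι → ℝ} (hS : HasDerivAt S S' t) (hSt : (S t).IsSymm)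
    (hdet : IsUnit (S t).det) (hv : HasDerivAt v v' t) :
    HasDerivAt (fun s => v s ⬝ᵥ (S s)⁻¹ *ᵥ v s)
      (2 * ((S t)⁻¹ *ᵥ v t ⬝ᵥ v') - (S t)⁻¹ *ᵥ v t ⬝ᵥ S' *ᵥ (S t)⁻¹ *ᵥ v t) t := by
  refine (hv.dotProduct ((hasDerivAt_inv hS hdet).mulVec hv)).congr_deriv ?_
  have hsymm : ((S t)⁻¹)ᵀ = (S t)⁻¹ := by rw [transpose_nonsing_inv, hSt.eq]
  have hself : ∀ u w, u ⬝ᵥ (S t)⁻¹ *ᵥ w = (S t)⁻¹ *ᵥ u ⬝ᵥ w := fun u w => by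
    rw [dotProduct_mulVec, ← mulVec_transpose, hsymm]
  rw [dotProduct_comm v', neg_mulVec, ← mulVec_mulVec, ← mulVec_mulVec, dotProduct_add,
    dotProduct_neg, hself, hself]
  ring

theorem trace_inv_mul_mul_add_mul_transpose {S : Matrix ι ι ℝ} (hS : IsUnit S.det)
    (F : Matrix ι ι ℝ) :
    (S⁻¹ * (F * S + S * Fᵀ)).trace = 2 * F.trace := by
  rw [Matrix.mul_add, trace_add, trace_mul_comm, Matrix.mul_assoc, mul_nonsing_inv _ hS,
    Matrix.mul_one, ← Matrix.mul_assoc, nonsing_inv_mul _ hS, Matrix.one_mul, trace_transpose,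
    two_mul]

theorem inner_toEuclideanLin (A : Matrix ι ι ℝ) (x y : EuclideanSpace ℝ ι) :
    ⟪x, toEuclideanLin A y⟫ = ofLp x ⬝ᵥ A *ᵥ ofLp y :=
  inner_toEuclideanCLM A x y

end Matrix

theorem hasFDerivAt_inner_apply_self {E : Type*} [NormedAddCommGroup E] [InnerProductSpace ℝ E]
    {T : E →L[ℝ] E} (hT : (T : E →ₗ[ℝ] E).IsSymmetric) (x : E) :
    HasFDerivAt (fun y => ⟪y, T y⟫) ((2 : ℝ) • innerSL ℝ (T x)) x := by
  refine (hasFDerivAt_id x).inner ℝ T.hasFDerivAt |>.congr_fderiv ?_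
  ext u
  have h := hT x u
  simp only [ContinuousLinearMap.coe_coe] at h
  simp [fderivInnerCLM_apply, two_smul, ← h, real_inner_comm u]

variable {n : ℕ}

theorem hasFDerivAt_gaussDensity {S : Matrix (Fin n) (Fin n) ℝ} (hS : S.IsHermitian)
    (b x : EuclideanSpace ℝ (Fin n)) :
    HasFDerivAt (gaussDensity S b)
      (-gaussDensity S b x • innerSL ℝ (toEuclideanLin S⁻¹ (x - b))) x := by
  have hQ := (hasFDerivAt_inner_apply_self (T := toEuclideanCLM (𝕜 := ℝ) S⁻¹)
    (isSymmetric_toEuclideanLin_iff.2 hS.inv) (x - b)).comp x ((hasFDerivAt_id x).sub_const b)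
  refine ((hQ.const_mul (-(1 / 2))).exp.const_mul _).congr_fderiv ?_
  ext u
  simp only [gaussDensity, ← coe_toEuclideanCLM_eq_toEuclideanLin, ContinuousLinearMap.coe_coe,
    ContinuousLinearMap.comp_id, Function.comp_apply, id_eq, map_sub, _root_.smul_apply,
    _root_.sub_apply, _root_.neg_apply, coe_innerSL_apply, smul_eq_mul, neg_smul, neg_mul, one_div]
  ring

theorem HasDerivAt.gaussDensity {S : ℝ → Matrix (Fin n) (Fin n) ℝ}
    {S' : Matrix (Fin n) (Fin n) ℝ} {b : ℝ → EuclideanSpace ℝ (Fin n)}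
    {b' : EuclideanSpace ℝ (Fin n)} {t : ℝ} (hS : HasDerivAt S S' t) (hSt : (S t).PosDef)
    (hb : HasDerivAt b b' t) (x : EuclideanSpace ℝ (Fin n)) :
    HasDerivAt (fun s => gaussDensity (S s) (b s) x)
      (gaussDensity (S t) (b t) x * (-(1 / 2) * ((S t)⁻¹ * S').trace
        + (S t)⁻¹ *ᵥ ofLp (x - b t) ⬝ᵥ ofLp b'
        + 1 / 2 * ((S t)⁻¹ *ᵥ ofLp (x - b t) ⬝ᵥ S' *ᵥ (S t)⁻¹ *ᵥ ofLp (x - b t)))) t := by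
  have hpos := hSt.det_pos
  have hv : HasDerivAt (fun s => ofLp (x - b s)) (-ofLp b') t :=
    ((PiLp.hasFDerivAt_ofLp 2 (x - b t)).comp_hasDerivAt t
      ((hasDerivAt_const t x).sub hb)).congr_deriv (by rw [zero_sub, map_neg]; rfl)
  have hq := hasDerivAt_dotProduct_inv_mulVec hS (isHermitian_iff_isSymm.1 hSt.isHermitian)
    (isUnit_iff_ne_zero.2 hpos.ne') hv
  have hρ := ((hasDerivAt_det_rpow hS hpos (-1 / 2)).const_mul
    ((2 * Real.pi) ^ (-(n : ℝ) / 2))).mul (hq.const_mul (-(1 / 2))).exp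
  simp only [_root_.gaussDensity, inner_toEuclideanLin]
  refine hρ.congr_deriv ?_
  rw [dotProduct_neg]
  ring

theorem diver_smul {ρ : EuclideanSpace ℝ (Fin n) → ℝ}
    {w : EuclideanSpace ℝ (Fin n) → EuclideanSpace ℝ (Fin n)} {x : EuclideanSpace ℝ (Fin n)}
    (hρ : DifferentiableAt ℝ ρ x) (hw : DifferentiableAt ℝ w x) :
    diver (fun y => ρ y • w y) x = ρ x * diver w x + fderiv ℝ ρ x (w x) := by
  have hwi : ∀ i, DifferentiableAt ℝ (fun y => w y i) x := fun i =>
    (EuclideanSpace.proj (𝕜 := ℝ) i).differentiableAt.comp x hw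
  have hterm : ∀ i, fderiv ℝ (fun y => (ρ y • w y) i) x (EuclideanSpace.single i 1)
      = ρ x * fderiv ℝ (fun y => w y i) x (EuclideanSpace.single i 1)
        + w x i * fderiv ℝ ρ x (EuclideanSpace.single i 1) := fun i => by
    rw [show (fun y => (ρ y • w y) i) = fun y => ρ y * w y i from rfl,
      fderiv_fun_mul hρ (hwi i)]
    simp only [_root_.add_apply, _root_.smul_apply, smul_eq_mul]
  rw [diver, Finset.sum_congr rfl fun i _ => hterm i, Finset.sum_add_distrib, diver, Finset.mul_sum]
  congr 1
  conv_rhs => rw [← (EuclideanSpace.basisFun (Fin n) ℝ).sum_repr (w x)]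
  simp [map_sum]

theorem diver_toEuclideanLin_add_const (A : Matrix (Fin n) (Fin n) ℝ)
    (c x : EuclideanSpace ℝ (Fin n)) :
    diver (fun y => toEuclideanLin A y + c) x = A.trace := by
  refine Finset.sum_congr rfl fun i _ => ?_
  have h : HasFDerivAt (fun y => (toEuclideanLin A y + c) i)
      ((EuclideanSpace.proj i).comp (toEuclideanCLM (𝕜 := ℝ) A)) x :=
    (EuclideanSpace.proj (𝕜 := ℝ) i).hasFDerivAt.comp x
      ((toEuclideanCLM (𝕜 := ℝ) A).hasFDerivAt.add_const c)
  rw [h.fderiv]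
  simp

theorem diver_gaussDensity_smul_affine {S : Matrix (Fin n) (Fin n) ℝ} (hS : S.IsHermitian)
    (A : Matrix (Fin n) (Fin n) ℝ) (b c x : EuclideanSpace ℝ (Fin n)) :
    diver (fun y => gaussDensity S b y • (toEuclideanLin A y + c)) x
      = gaussDensity S b x * (A.trace - S⁻¹ *ᵥ ofLp (x - b) ⬝ᵥ ofLp (toEuclideanLin A x + c)) := by
  have hρ := hasFDerivAt_gaussDensity hS b x
  have hw : DifferentiableAt ℝ (fun y => toEuclideanLin A y + c) x :=
    (toEuclideanCLM (𝕜 := ℝ) A).differentiableAt.add_const c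
  rw [diver_smul hρ.differentiableAt hw, diver_toEuclideanLin_add_const, hρ.fderiv,
    neg_smul, _root_.neg_apply, _root_.smul_apply, innerSL_apply_apply, real_inner_comm,
    inner_toEuclideanLin, dotProduct_comm, smul_eq_mul]
  ring

theorem gaussian_continuity_equation_general {n : ℕ}
    (F : ℝ → Matrix (Fin n) (Fin n) ℝ) (m : ℝ → EuclideanSpace ℝ (Fin n))
    (nb : ℝ → EuclideanSpace ℝ (Fin n))
    (hnb : ∀ t, HasDerivAt nb (Matrix.toEuclideanLin (F t) (nb t) + m t) t)
    (S S' : ℝ → Matrix (Fin n) (Fin n) ℝ)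
    (hS : ∀ (t : ℝ) (i j : Fin n), HasDerivAt (fun s => S s i j) (S' t i j) t)
    (hSpd : ∀ t, (S t).PosDef)
    (hS' : ∀ t, S' t = F t * S t + S t * (F t)ᵀ) :
    ∀ (x : EuclideanSpace ℝ (Fin n)) (t : ℝ),
      deriv (fun s => gaussDensity (S s) (nb s) x) t
        + diver (fun y => gaussDensity (S t) (nb t) y •
            (Matrix.toEuclideanLin (F t) y + m t)) x = 0 := by
  intro x t
  have hSt : HasDerivAt S (S' t) t := hasDerivAt_pi.2 fun i => hasDerivAt_pi.2 (hS t i)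
  have hdet : IsUnit (S t).det := isUnit_iff_ne_zero.2 (hSpd t).det_pos.ne'
  set ρ := gaussDensity (S t) (nb t) x
  set w := (S t)⁻¹ *ᵥ ofLp (x - nb t)
  set u := ofLp (toEuclideanLin (F t) x + m t)
  have hSw : S t *ᵥ w = ofLp (x - nb t) := by
    rw [mulVec_mulVec, mul_nonsing_inv _ hdet, one_mulVec]
  have hu : ofLp (toEuclideanLin (F t) (nb t) + m t) + F t *ᵥ ofLp (x - nb t) = u := by
    simp only [u, WithLp.ofLp_add, WithLp.ofLp_sub, toLpLin_apply, WithLp.ofLp_toLp, mulVec_sub]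
    abel
  have htime : deriv (fun s => gaussDensity (S s) (nb s) x) t = ρ * (-(F t).trace + w ⬝ᵥ u) := by
    rw [(hSt.gaussDensity (hSpd t) (hnb t) x).deriv, hS' t,
      trace_inv_mul_mul_add_mul_transpose hdet,
      dotProduct_mul_add_mul_transpose_mulVec (isHermitian_iff_isSymm.1 (hSpd t).isHermitian),
      hSw, ← hu, dotProduct_add]
    ring
  rw [htime, diver_gaussDensity_smul_affine (hSpd t).isHermitian]
  ring

/-- If `n̄' = F n̄ + m` and `Σ' = FΣ + ΣFᵀ` with `Σ(t)` symmetric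
positive definite, then the Gaussian density with mean `n̄(t)` and covariance `Σ(t)`
satisfies the continuity equation `∂ρ/∂t + ∇·((F(t)x + m(t))ρ) = 0`. -/
theorem gaussian_continuity_equation {n : ℕ}
    (F : ℝ → Matrix (Fin n) (Fin n) ℝ) (m : ℝ → EuclideanSpace ℝ (Fin n))
    (hF : Continuous F) (hm : Continuous m)
    (nb : ℝ → EuclideanSpace ℝ (Fin n))
    (hnb : ∀ t, HasDerivAt nb (Matrix.toEuclideanLin (F t) (nb t) + m t) t)
    (S S' : ℝ → Matrix (Fin n) (Fin n) ℝ)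
    (hS : ∀ (t : ℝ) (i j : Fin n), HasDerivAt (fun s => S s i j) (S' t i j) t)
    (hSpd : ∀ t, (S t).PosDef)
    (hS' : ∀ t, S' t = F t * S t + S t * (F t)ᵀ) :
    ∀ (x : EuclideanSpace ℝ (Fin n)) (t : ℝ),
      deriv (fun s => gaussDensity (S s) (nb s) x) t
        + diver (fun y => gaussDensity (S t) (nb t) y •
            (Matrix.toEuclideanLin (F t) y + m t)) x = 0 :=
  gaussian_continuity_equation_general F m nb hnb S S' hS hSpd hS'
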